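/- Then (i) the subspace of X ∈ Sym₀²(ℂ⁵) satisfying diag(−I₂, B)·X·diag(−I₂, B)ᵀ = X for every B ∈ SO(3) equals { [[S, 0],[0, qI₃]] : S a symmetric 2×2 complex matrix, q ∈ ℂ, tr S + 3q = 0 }, which is 3-dimensional; and (ii) letting h := the block matrix [[0,1],[1,0]] ⊕ diag(−1,1,1) ∈ SO(5), the subspace of X ∈ Sym₀²(ℂ⁵) fixed as in (i) and additionally satisfying hXhᵀ = X equals the 2-dimensional span of [[0,1],[1,0]] ⊕ 0₃ and diag(3,3,−2,−2,−2). -/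

import Mathlib

/-!
STATEMENT 13: (i) The vectors of Sym₀²(ℂ⁵) fixed by conjugation by diag(−I₂,B)
for all B ∈ SO(3) are the matrices [[S,0],[0,qI₃]] with S symmetric 2×2 and
tr S + 3q = 0 (3-dimensional); (ii) those additionally fixed by
h = [[0,1],[1,0]] ⊕ diag(−1,1,1) form the 2-dimensional span of
[[0,1],[1,0]] ⊕ 0₃ and diag(3,3,−2,−2,−2).
-/

open Matrix

noncomputable section

/-- SO(3) as a set of real matrices. -/
def SO3 : Set (Matrix (Fin 3) (Fin 3) ℝ) := {B | B * Bᵀ = 1 ∧ B.det = 1}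

/-- The block-diagonal matrix diag(−I₂, B), as a complex 5×5 matrix. -/
def embB (B : Matrix (Fin 3) (Fin 3) ℝ) : Matrix (Fin 5) (Fin 5) ℂ :=
  !![-1, 0, 0, 0, 0;
     0, -1, 0, 0, 0;
     0, 0, (B 0 0 : ℂ), (B 0 1 : ℂ), (B 0 2 : ℂ);
     0, 0, (B 1 0 : ℂ), (B 1 1 : ℂ), (B 1 2 : ℂ);
     0, 0, (B 2 0 : ℂ), (B 2 1 : ℂ), (B 2 2 : ℂ)]

/-- h = [[0,1],[1,0]] ⊕ diag(−1,1,1) ∈ SO(5). -/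
def h13 : Matrix (Fin 5) (Fin 5) ℂ :=
  !![0, 1, 0, 0, 0;
     1, 0, 0, 0, 0;
     0, 0, -1, 0, 0;
     0, 0, 0, 1, 0;
     0, 0, 0, 0, 1]

/-- The set { [[S,0],[0,qI₃]] : S symmetric 2×2, tr S + 3q = 0 }. -/
def blockSet13 : Set (Matrix (Fin 5) (Fin 5) ℂ) :=
  {Y | ∃ s₀₀ s₀₁ s₁₁ q : ℂ, s₀₀ + s₁₁ + 3 * q = 0 ∧
    Y = !![s₀₀, s₀₁, 0, 0, 0;
           s₀₁, s₁₁, 0, 0, 0;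
           0, 0, q, 0, 0;
           0, 0, 0, q, 0;
           0, 0, 0, 0, q]}

/-- [[0,1],[1,0]] ⊕ 0₃. -/
def E13 : Matrix (Fin 5) (Fin 5) ℂ :=
  !![0, 1, 0, 0, 0;
     1, 0, 0, 0, 0;
     0, 0, 0, 0, 0;
     0, 0, 0, 0, 0;
     0, 0, 0, 0, 0]

def F13 : Matrix (Fin 5) (Fin 5) ℂ := Matrix.diagonal ![3, 3, -2, -2, -2]

/-
Under `Fin 5 ≃ Fin 2 ⊕ Fin 3`, conjugation by `diag(−I₂, B)` fixes the upper left block, negates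
the off-diagonal blocks (up to a factor `B`) and conjugates the lower right block by `B`. Taking
`B = 1` kills the off-diagonal blocks. In the lower right block the sign matrices `diag(1, −1, −1)`
and `diag(−1, 1, −1)` kill the off-diagonal entries and the permutation matrix of a 3-cycle makes
the diagonal constant, so that block is scalar; conversely orthogonality of `B` shows that every
`[[S, 0], [0, q I₃]]` is fixed. Conjugation by `h13` swaps the two diagonal entries of `S`, so
its fixed points are the matrices with `S₀₀ = S₁₁`, i.e. the span of `E13` and `F13`.
-/

open Equiv

section Conjugation

variable {l m n K : Type*}

theorem submatrix_equiv_inj (e : l ≃ m) {M N : Matrix m m K} :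
    M.submatrix e e = N.submatrix e e ↔ M = N :=
  (reindex e.symm e.symm).injective.eq_iff

variable [Fintype m] [Fintype n]

theorem submatrix_mul_mul_transpose_equiv [CommRing K] (M X : Matrix n n K) (e : m ≃ n) :
    (M * X * Mᵀ).submatrix e e = M.submatrix e e * X.submatrix e e * (M.submatrix e e)ᵀ := by
  rw [transpose_submatrix, submatrix_mul_equiv _ _ _ e, submatrix_mul_equiv _ _ _ e]

theorem fromBlocks_neg_one_mul_mul_transpose [DecidableEq m] [CommRing K] (U : Matrix n n K)
    (A : Matrix m m K) (B : Matrix m n K) (C : Matrix n m K) (D : Matrix n n K) :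
    fromBlocks (-1) 0 0 U * fromBlocks A B C D * (fromBlocks (-1) 0 0 U)ᵀ =
      fromBlocks A (-(B * Uᵀ)) (-(U * C)) (U * D * Uᵀ) := by
  simp [fromBlocks_transpose, fromBlocks_multiply]

variable [DecidableEq n]

theorem diagonal_mul_mul_transpose_apply [CommRing K] (d : n → K) (X : Matrix n n K) (i j : n) :
    (diagonal d * X * (diagonal d)ᵀ) i j = d i * d j * X i j := by
  rw [diagonal_transpose, mul_diagonal, diagonal_mul]
  ring

theorem apply_eq_zero_of_diagonal_conj_eq [Field K] [CharZero K] {d : n → K} {X : Matrix n n K}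
    (hX : diagonal d * X * (diagonal d)ᵀ = X) (i j : n) (hij : d i * d j = -1) : X i j = 0 := by
  have := congrFun (congrFun hX i) j
  rwa [diagonal_mul_mul_transpose_apply, hij, neg_one_mul, CharZero.neg_eq_self_iff] at this

theorem permMatrix_mul_mul_transpose [CommRing K] (σ : Perm n) (X : Matrix n n K) :
    σ.permMatrix K * X * (σ.permMatrix K)ᵀ = X.submatrix σ σ := by
  rw [transpose_permMatrix, Perm.permMatrix, Perm.permMatrix, PEquiv.toMatrix_toPEquiv_mul,
    PEquiv.mul_toMatrix_toPEquiv]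
  rfl

end Conjugation

theorem one_mem_SO3 : (1 : Matrix (Fin 3) (Fin 3) ℝ) ∈ SO3 :=
  ⟨by simp, det_one⟩

theorem diagonal_mem_SO3 {a b c : ℝ} (ha : a * a = 1) (hb : b * b = 1) (hc : c * c = 1)
    (habc : a * b * c = 1) : diagonal ![a, b, c] ∈ SO3 := by
  refine ⟨?_, ?_⟩
  · rw [diagonal_transpose, diagonal_mul_diagonal, ← diagonal_one]
    congr 1
    ext i
    fin_cases i <;> simp [ha, hb, hc]
  · rw [det_diagonal, Fin.prod_univ_three]
    exact habc

theorem permMatrix_mem_SO3 {σ : Perm (Fin 3)} (hσ : Perm.sign σ = 1) : σ.permMatrix ℝ ∈ SO3 :=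
  ⟨by rw [transpose_permMatrix, ← permMatrix_mul, inv_mul_cancel, permMatrix_one],
    by simp [det_permutation, hσ]⟩

theorem eq_smul_one_of_forall_SO3_conj {K : Type*} [Field K] [CharZero K] (f : ℝ →+* K)
    {D : Matrix (Fin 3) (Fin 3) K} (hD : ∀ B ∈ SO3, B.map f * D * (B.map f)ᵀ = D) :
    D = D 0 0 • 1 := by
  have hsign : ∀ {a b c : ℝ}, a * a = 1 → b * b = 1 → c * c = 1 → a * b * c = 1 →
      (diagonal fun i => f (![a, b, c] i)) * D * (diagonal fun i => f (![a, b, c] i))ᵀ = D :=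
    fun ha hb hc habc => by
      simpa only [diagonal_map (map_zero f)] using hD _ (diagonal_mem_SO3 ha hb hc habc)
  have hoff : ∀ i j, i ≠ j → D i j = 0 := by
    have h₁ := apply_eq_zero_of_diagonal_conj_eq <|
      hsign (a := 1) (b := -1) (c := -1) (by norm_num) (by norm_num) (by norm_num) (by norm_num)
    have h₂ := apply_eq_zero_of_diagonal_conj_eq <|
      hsign (a := -1) (b := 1) (c := -1) (by norm_num) (by norm_num) (by norm_num) (by norm_num)
    intro i j hij
    fin_cases i <;> fin_cases j <;> simp_all
  have hcycle : D.submatrix (finRotate 3) (finRotate 3) = D := by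
    simpa only [Perm.permMatrix, PEquiv.map_toMatrix, permMatrix_mul_mul_transpose]
      using hD _ (permMatrix_mem_SO3 (σ := finRotate 3) (by decide))
  have h₁₁ : D 1 1 = D 0 0 := congrFun (congrFun hcycle 0) 0
  have h₂₂ : D 2 2 = D 1 1 := congrFun (congrFun hcycle 1) 1
  ext i j
  by_cases hij : i = j
  · subst hij
    fin_cases i <;> simp [h₁₁, h₂₂]
  · simp [hoff i j hij, one_apply_ne hij]

def blockMat13 (a b c q : ℂ) : Matrix (Fin 5) (Fin 5) ℂ :=
  !![a, b, 0, 0, 0;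
     b, c, 0, 0, 0;
     0, 0, q, 0, 0;
     0, 0, 0, q, 0;
     0, 0, 0, 0, q]

theorem mem_blockSet13 {X : Matrix (Fin 5) (Fin 5) ℂ} :
    X ∈ blockSet13 ↔ ∃ a b c q, a + c + 3 * q = 0 ∧ X = blockMat13 a b c q :=
  Iff.rfl

section BlockMat13

variable (a b c q : ℂ)

theorem blockMat13_transpose : (blockMat13 a b c q)ᵀ = blockMat13 a b c q := by
  ext i j; fin_cases i <;> fin_cases j <;> rfl

theorem trace_blockMat13 : (blockMat13 a b c q).trace = a + c + 3 * q := by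
  simp [blockMat13, trace, Fin.sum_univ_five]
  ring

theorem blockMat13_add (a' b' c' q' : ℂ) :
    blockMat13 a b c q + blockMat13 a' b' c' q' =
      blockMat13 (a + a') (b + b') (c + c') (q + q') := by
  ext i j; fin_cases i <;> fin_cases j <;> simp [blockMat13]

theorem smul_blockMat13 (s : ℂ) :
    s • blockMat13 a b c q = blockMat13 (s * a) (s * b) (s * c) (s * q) := by
  ext i j; fin_cases i <;> fin_cases j <;> simp [blockMat13]

theorem blockMat13_zero : blockMat13 0 0 0 0 = 0 := by
  ext i j; fin_cases i <;> fin_cases j <;> rfl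

variable {a b c q} in
theorem blockMat13_inj {a' b' c' q' : ℂ} :
    blockMat13 a b c q = blockMat13 a' b' c' q' ↔ a = a' ∧ b = b' ∧ c = c' ∧ q = q' := by
  refine ⟨fun h => ⟨congrFun (congrFun h 0) 0, congrFun (congrFun h 0) 1,
    congrFun (congrFun h 1) 1, congrFun (congrFun h 2) 2⟩, ?_⟩
  rintro ⟨rfl, rfl, rfl, rfl⟩
  rfl

theorem blockMat13_submatrix :
    (blockMat13 a b c q).submatrix finSumFinEquiv finSumFinEquiv =
      fromBlocks !![a, b; b, c] 0 0 (q • (1 : Matrix (Fin 3) (Fin 3) ℂ)) := by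
  ext (i | i) (j | j) <;> fin_cases i <;> fin_cases j <;> simp [blockMat13] <;> rfl

theorem h13_conj_blockMat13 : h13 * blockMat13 a b c q * h13ᵀ = blockMat13 c b a q := by
  ext i j
  fin_cases i <;> fin_cases j <;> simp [h13, blockMat13, mul_apply, Fin.sum_univ_five]

end BlockMat13

theorem embB_submatrix (B : Matrix (Fin 3) (Fin 3) ℝ) :
    (embB B).submatrix finSumFinEquiv finSumFinEquiv =
      fromBlocks (-1) 0 0 (B.map Complex.ofRealHom) := by
  ext (i | i) (j | j) <;> fin_cases i <;> fin_cases j <;> simp [embB] <;> rfl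

theorem embB_conj_blockMat13 {B : Matrix (Fin 3) (Fin 3) ℝ} (hB : B * Bᵀ = 1) (a b c q : ℂ) :
    embB B * blockMat13 a b c q * (embB B)ᵀ = blockMat13 a b c q := by
  have hU : B.map Complex.ofRealHom * (B.map Complex.ofRealHom)ᵀ = 1 := by
    rw [← transpose_map, ← Matrix.map_mul, hB, Matrix.map_one _ (map_zero _) (map_one _)]
  refine (submatrix_equiv_inj (finSumFinEquiv : Fin 2 ⊕ Fin 3 ≃ Fin 5)).mp ?_
  rw [submatrix_mul_mul_transpose_equiv, embB_submatrix, blockMat13_submatrix,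
    fromBlocks_neg_one_mul_mul_transpose, Matrix.mul_smul, mul_one, Matrix.smul_mul, hU]
  simp

theorem exists_eq_blockMat13_of_forall_embB_conj {X : Matrix (Fin 5) (Fin 5) ℂ} (hsym : Xᵀ = X)
    (hfix : ∀ B ∈ SO3, embB B * X * (embB B)ᵀ = X) : ∃ a b c q, X = blockMat13 a b c q := by
  set e : Fin 2 ⊕ Fin 3 ≃ Fin 5 := finSumFinEquiv
  set Y := X.submatrix e e
  have hY : ∀ B ∈ SO3, fromBlocks Y.toBlocks₁₁ (-(Y.toBlocks₁₂ * (B.map Complex.ofRealHom)ᵀ))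
      (-(B.map Complex.ofRealHom * Y.toBlocks₂₁))
      (B.map Complex.ofRealHom * Y.toBlocks₂₂ * (B.map Complex.ofRealHom)ᵀ) =
      fromBlocks Y.toBlocks₁₁ Y.toBlocks₁₂ Y.toBlocks₂₁ Y.toBlocks₂₂ := fun B hB => by
    rw [← fromBlocks_neg_one_mul_mul_transpose, fromBlocks_toBlocks, ← embB_submatrix,
      ← submatrix_mul_mul_transpose_equiv, hfix B hB]
  obtain ⟨-, h₁₂, h₂₁, -⟩ := fromBlocks_inj.mp (hY 1 one_mem_SO3)
  simp only [Complex.ofRealHom_eq_coe, Complex.ofReal_zero, Complex.ofReal_one, Matrix.map_one,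
    transpose_one, Matrix.mul_one, Matrix.one_mul] at h₁₂ h₂₁
  have hneg : ∀ {p r : Type} {M : Matrix p r ℂ}, -M = M → M = 0 := fun h => by
    ext i j; exact CharZero.neg_eq_self_iff.mp (congrFun (congrFun h i) j)
  have h₂₂ := eq_smul_one_of_forall_SO3_conj Complex.ofRealHom
    fun B hB => (fromBlocks_inj.mp (hY B hB)).2.2.2
  set A := Y.toBlocks₁₁
  have hA : !![A 0 0, A 0 1; A 0 1, A 1 1] = A := by
    have h₁₀ : A 1 0 = A 0 1 := congrFun (congrFun hsym 0) 1
    ext i j; fin_cases i <;> fin_cases j <;> simp [h₁₀]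
  refine ⟨A 0 0, A 0 1, A 1 1, Y.toBlocks₂₂ 0 0, (submatrix_equiv_inj e).mp ?_⟩
  rw [blockMat13_submatrix, hA, ← h₂₂, ← hneg h₁₂, ← hneg h₂₁, fromBlocks_toBlocks]

theorem mem_blockSet13_iff {X : Matrix (Fin 5) (Fin 5) ℂ} :
    X ∈ blockSet13 ↔ Xᵀ = X ∧ X.trace = 0 ∧ ∀ B ∈ SO3, embB B * X * (embB B)ᵀ = X := by
  rw [mem_blockSet13]
  constructor
  · rintro ⟨a, b, c, q, htr, rfl⟩
    exact ⟨blockMat13_transpose a b c q, (trace_blockMat13 a b c q).trans htr,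
      fun B hB => embB_conj_blockMat13 hB.1 a b c q⟩
  · rintro ⟨hsym, htr, hfix⟩
    obtain ⟨a, b, c, q, rfl⟩ := exists_eq_blockMat13_of_forall_embB_conj hsym hfix
    exact ⟨a, b, c, q, (trace_blockMat13 a b c q).symm.trans htr, rfl⟩

theorem span_blockSet13 : Submodule.span ℂ blockSet13 = Submodule.span ℂ
    (Set.range ![blockMat13 3 0 0 (-1), blockMat13 0 0 3 (-1), blockMat13 0 1 0 0]) := by
  refine le_antisymm (Submodule.span_le.mpr ?_) (Submodule.span_mono ?_)
  · intro X hX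
    obtain ⟨a, b, c, q, htr, rfl⟩ := mem_blockSet13.mp hX
    refine (Submodule.mem_span_range_iff_exists_fun ℂ).mpr ⟨![a / 3, c / 3, b], ?_⟩
    simp only [Fin.sum_univ_three, Matrix.cons_val, smul_blockMat13, blockMat13_add,
      blockMat13_inj]
    exact ⟨by ring, by ring, by ring, by linear_combination -htr / 3⟩
  · rintro _ ⟨i, rfl⟩
    fin_cases i <;> exact ⟨_, _, _, _, by norm_num, rfl⟩

theorem finrank_span_blockSet13 : Module.finrank ℂ (Submodule.span ℂ blockSet13) = 3 := by
  rw [span_blockSet13, finrank_span_eq_card]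
  · rfl
  rw [Fintype.linearIndependent_iff]
  intro g hg
  simp only [Fin.sum_univ_three, Matrix.cons_val, smul_blockMat13, blockMat13_add,
    ← blockMat13_zero, blockMat13_inj, mul_zero, add_zero, zero_add, mul_one, mul_eq_zero,
    OfNat.ofNat_ne_zero, or_false] at hg
  intro i
  fin_cases i <;> simp [hg]

theorem E13_eq_blockMat13 : E13 = blockMat13 0 1 0 0 := rfl

theorem F13_eq_blockMat13 : F13 = blockMat13 3 0 3 (-2) := by
  ext i j; fin_cases i <;> fin_cases j <;> simp [F13, blockMat13]

theorem smul_E13_add_smul_F13 (s t : ℂ) :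
    s • E13 + t • F13 = blockMat13 (3 * t) s (3 * t) (-2 * t) := by
  rw [E13_eq_blockMat13, F13_eq_blockMat13, smul_blockMat13, smul_blockMat13, blockMat13_add]
  congr 1 <;> ring

theorem finrank_span_E13_F13 : Module.finrank ℂ (Submodule.span ℂ {E13, F13}) = 2 := by
  have hli : LinearIndependent ℂ ![E13, F13] := by
    refine LinearIndependent.pair_iff.mpr fun s t h => ?_
    rw [smul_E13_add_smul_F13, ← blockMat13_zero, blockMat13_inj] at h
    exact ⟨h.2.1, by simpa using h.1⟩
  rw [← Matrix.range_cons_cons_empty E13 F13 ![], finrank_span_eq_card hli]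
  rfl

theorem mem_span_E13_F13_iff {X : Matrix (Fin 5) (Fin 5) ℂ} :
    X ∈ Submodule.span ℂ {E13, F13} ↔ X ∈ blockSet13 ∧ h13 * X * h13ᵀ = X := by
  rw [Submodule.mem_span_pair]
  constructor
  · rintro ⟨s, t, rfl⟩
    rw [smul_E13_add_smul_F13, h13_conj_blockMat13]
    exact ⟨⟨_, _, _, _, by ring, rfl⟩, rfl⟩
  · rintro ⟨hX, hh⟩
    obtain ⟨a, b, c, q, htr, rfl⟩ := mem_blockSet13.mp hX
    obtain ⟨rfl, -⟩ := blockMat13_inj.mp ((h13_conj_blockMat13 a b c q).symm.trans hh)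
    refine ⟨b, c / 3, ?_⟩
    rw [smul_E13_add_smul_F13, blockMat13_inj]
    exact ⟨by ring, rfl, by ring, by linear_combination -htr / 3⟩

theorem statement13 :
    ({X : Matrix (Fin 5) (Fin 5) ℂ | Xᵀ = X ∧ X.trace = 0 ∧
        ∀ B ∈ SO3, embB B * X * (embB B)ᵀ = X}
      = blockSet13) ∧
    Module.finrank ℂ ↥(Submodule.span ℂ blockSet13) = 3 ∧
    ({X : Matrix (Fin 5) (Fin 5) ℂ | Xᵀ = X ∧ X.trace = 0 ∧
        (∀ B ∈ SO3, embB B * X * (embB B)ᵀ = X) ∧ h13 * X * h13ᵀ = X}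
      = ↑(Submodule.span ℂ {E13, F13})) ∧
    Module.finrank ℂ ↥(Submodule.span ℂ {E13, F13}) = 2 := by
  refine ⟨Set.ext fun X => mem_blockSet13_iff.symm, finrank_span_blockSet13,
    Set.ext fun X => ?_, finrank_span_E13_F13⟩
  rw [SetLike.mem_coe, mem_span_E13_F13_iff, mem_blockSet13_iff]
  simp only [Set.mem_ofPred_eq, and_assoc]

end
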